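/- Let H be a hypergraph and G its incidence graph. Then H is eulerian if and only if G has a spanning subgraph G′ with at most one nontrivial connected component such that every e-vertex has degree exactly 2 in G′ and every v-vertex has even degree in G′. -/

import Mathlib

open scoped Classical

/-- A hypergraph: a finite nonempty vertex type `V`, a finite index type `E` of
edges (so that repeated edges are allowed, as in a multiset of edges), and a map
`mem` assigning to each edge the finite set of its vertices. -/
structure Hypergraph' where
  V : Type
  E : Type
  [fintypeV : Fintype V]
  [fintypeE : Fintype E]
  [nonemptyV : Nonempty V]
  mem : E → Finset V

attribute [instance] Hypergraph'.fintypeV Hypergraph'.fintypeE Hypergraph'.nonemptyV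

namespace Hypergraph'

/-- A walk `v₀ e₁ v₁ e₂ … e_k v_k` in a hypergraph: consecutive anchors are
distinct and both lie in the connecting edge. -/
structure Walk (H : Hypergraph') where
  k : ℕ
  vtx : Fin (k + 1) → H.V
  edge : Fin k → H.E
  mem_left : ∀ i : Fin k, vtx i.castSucc ∈ H.mem (edge i)
  mem_right : ∀ i : Fin k, vtx i.succ ∈ H.mem (edge i)
  ne : ∀ i : Fin k, vtx i.castSucc ≠ vtx i.succ

/-- A trail is a walk with pairwise distinct edges. -/
def Walk.IsTrail {H : Hypergraph'} (W : H.Walk) : Prop :=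
  Function.Injective W.edge

/-- A closed walk: `v₀ = v_k` and `k ≥ 2`. -/
def Walk.IsClosed {H : Hypergraph'} (W : H.Walk) : Prop :=
  W.vtx 0 = W.vtx (Fin.last W.k) ∧ 2 ≤ W.k

def Walk.IsClosedTrail {H : Hypergraph'} (W : H.Walk) : Prop :=
  W.IsTrail ∧ W.IsClosed

/-- The anchors of a walk. -/
def Walk.anchors {H : Hypergraph'} (W : H.Walk) : Set H.V := Set.range W.vtx

/-- The set of edges traversed by a walk. -/
def Walk.edgeSet {H : Hypergraph'} (W : H.Walk) : Set H.E := Set.range W.edge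

/-- An Euler tour: a closed trail traversing every edge exactly once. -/
def IsEulerTour (H : Hypergraph') (W : H.Walk) : Prop :=
  W.IsClosedTrail ∧ Function.Bijective W.edge

def HasEulerTour (H : Hypergraph') : Prop := ∃ W : H.Walk, H.IsEulerTour W

/-- A hypergraph is eulerian if it has no edges or admits an Euler tour. -/
def IsEulerian (H : Hypergraph') : Prop := IsEmpty H.E ∨ H.HasEulerTour

/-- An Euler family: a set of pairwise anchor-disjoint, edge-disjoint closed
trails jointly traversing every edge exactly once. -/
def IsEulerFamily (H : Hypergraph') (F : Set H.Walk) : Prop :=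
  (∀ W ∈ F, W.IsClosedTrail) ∧
  (∀ W ∈ F, ∀ W' ∈ F, W ≠ W' →
    Disjoint W.anchors W'.anchors ∧ Disjoint W.edgeSet W'.edgeSet) ∧
  (∀ e : H.E, ∃ W ∈ F, e ∈ W.edgeSet)

/-- A hypergraph is quasi-eulerian if it has no edges or admits an Euler family. -/
def IsQuasiEulerian (H : Hypergraph') : Prop :=
  IsEmpty H.E ∨ ∃ F : Set H.Walk, H.IsEulerFamily F

/-- A minimum Euler family: one with the fewest components. -/
def IsMinEulerFamily (H : Hypergraph') (F : Set H.Walk) : Prop :=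
  H.IsEulerFamily F ∧ ∀ F' : Set H.Walk, H.IsEulerFamily F' → F.ncard ≤ F'.ncard

/-- `H` is `k`-uniform if each edge has exactly `k` vertices. -/
def IsUniform (H : Hypergraph') (k : ℕ) : Prop := ∀ e : H.E, (H.mem e).card = k

/-- A covering `k`-hypergraph (`k ≥ 3`): a nonempty `k`-uniform hypergraph in
which every `(k-1)`-subset of the vertex set lies in at least one edge. -/
def IsCovering (H : Hypergraph') (k : ℕ) : Prop :=
  3 ≤ k ∧ Nonempty H.E ∧ H.IsUniform k ∧
    ∀ S : Finset H.V, S.card = k - 1 → ∃ e : H.E, S ⊆ H.mem e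

/-- The incidence graph of a hypergraph: the bipartite simple graph on
`V ⊕ E` joining `v` and `e` exactly when `v ∈ e`. -/
def incidenceGraph (H : Hypergraph') : SimpleGraph (H.V ⊕ H.E) where
  Adj x y :=
    (∃ v e, x = Sum.inl v ∧ y = Sum.inr e ∧ v ∈ H.mem e) ∨
    (∃ v e, x = Sum.inr e ∧ y = Sum.inl v ∧ v ∈ H.mem e)
  symm := by
    constructor
    rintro x y (⟨v, e, rfl, rfl, h⟩ | ⟨v, e, rfl, rfl, h⟩)
    · exact Or.inr ⟨v, e, rfl, rfl, h⟩
    · exact Or.inl ⟨v, e, rfl, rfl, h⟩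
  loopless := by
    constructor
    rintro x (⟨v, e, rfl, h, -⟩ | ⟨v, e, rfl, h, -⟩) <;> exact absurd h (by simp)

/-- `v` and `e` appear consecutively in some trail of the family `F`. -/
def ConsecIn (H : Hypergraph') (F : Set H.Walk) (v : H.V) (e : H.E) : Prop :=
  ∃ W ∈ F, ∃ i : Fin W.k, W.edge i = e ∧ (W.vtx i.castSucc = v ∨ W.vtx i.succ = v)

/-- The spanning subgraph of the incidence graph corresponding to an Euler
family `F`: its edges are the incident pairs `ve` consecutive in some trail of `F`. -/
def eulerSubgraph (H : Hypergraph') (F : Set H.Walk) : SimpleGraph (H.V ⊕ H.E) where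
  Adj x y :=
    (∃ v e, x = Sum.inl v ∧ y = Sum.inr e ∧ H.ConsecIn F v e) ∨
    (∃ v e, x = Sum.inr e ∧ y = Sum.inl v ∧ H.ConsecIn F v e)
  symm := by
    constructor
    rintro x y (⟨v, e, rfl, rfl, h⟩ | ⟨v, e, rfl, rfl, h⟩)
    · exact Or.inr ⟨v, e, rfl, rfl, h⟩
    · exact Or.inl ⟨v, e, rfl, rfl, h⟩
  loopless := by
    constructor
    rintro x (⟨v, e, rfl, h, -⟩ | ⟨v, e, rfl, h, -⟩) <;> exact absurd h (by simp)

end Hypergraph'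

/-- The degree of a vertex of a simple graph (number of neighbours). -/
noncomputable def sdeg {α : Type*} (G : SimpleGraph α) (x : α) : ℕ :=
  (G.neighborSet x).ncard

/-- A connected component of a simple graph is nontrivial if it contains an edge. -/
def NontrivComp {α : Type*} (G : SimpleGraph α) (c : G.ConnectedComponent) : Prop :=
  ∃ x y, G.Adj x y ∧ G.connectedComponentMk x = c

/-- The number of nontrivial connected components of a simple graph. -/
noncomputable def ntComps {α : Type*} (G : SimpleGraph α) : ℕ :=
  {c : G.ConnectedComponent | NontrivComp G c}.ncard

/-- A cut vertex of a simple graph: a vertex whose deletion increases the number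
of connected components, i.e. some two vertices distinct from it are joined by a
walk but by no walk avoiding it. -/
def IsCutVtx {α : Type*} (G : SimpleGraph α) (v : α) : Prop :=
  ∃ x y, x ≠ v ∧ y ≠ v ∧ G.Reachable x y ∧ ¬ ∃ p : G.Walk x y, v ∉ p.support

/-- An `F`-interchanging cycle: a cycle of the incidence graph such that every
e-vertex on it is incident in `G_F` with exactly one edge of the cycle. -/
def IsInterchanging (H : Hypergraph') (F : Set H.Walk) {x : H.V ⊕ H.E}
    (C : (H.incidenceGraph).Walk x x) : Prop :=
  C.IsCycle ∧ ∀ e : H.E, (Sum.inr e : H.V ⊕ H.E) ∈ C.support →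
    ∃! s : Sym2 (H.V ⊕ H.E),
      s ∈ C.edges ∧ (Sum.inr e : H.V ⊕ H.E) ∈ s ∧ s ∈ (H.eulerSubgraph F).edgeSet

/-- The symmetric difference of a simple graph with a set of potential edges. -/
def symmDiffEdges {α : Type*} (G : SimpleGraph α) (s : Set (Sym2 α)) : SimpleGraph α :=
  SimpleGraph.fromEdgeSet (symmDiff G.edgeSet s)

/-- An `F`-diminishing cycle: an `F`-interchanging cycle `C` such that
`G_F Δ C` has fewer nontrivial connected components than `G_F`. -/
def IsDiminishing (H : Hypergraph') (F : Set H.Walk) {x : H.V ⊕ H.E}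
    (C : (H.incidenceGraph).Walk x x) : Prop :=
  IsInterchanging H F C ∧
    ntComps (symmDiffEdges (H.eulerSubgraph F) {s | s ∈ C.edges}) <
      ntComps (H.eulerSubgraph F)

/-!
An Euler tour `v₀ e₁ v₁ … e_k v₀` of `H` is recorded in the incidence graph by joining each `eᵢ`
to `vᵢ₋₁` and `vᵢ`: every e-vertex gets degree 2, every passage through a vertex adds 2 to its
degree, and all these edges lie in one component.

Conversely, such a subgraph `G'` has all degrees even and one nontrivial component, so it has an
Eulerian circuit: a longest trail is closed by parity, and if it missed an edge, connectivity would
give an unused edge at one of its vertices, extending a rotation of the trail. As `G'` is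
bipartite, the circuit alternates between v- and e-vertices, and as e-vertices have degree 2 it
passes through each of them once; reading it off gives an Euler tour of `H`.
-/

lemma Fin.sum_castSucc_eq_sum_succ {M : Type*} [AddCancelCommMonoid M] {k : ℕ}
    (g : Fin (k + 1) → M) (hg : g 0 = g (Fin.last k)) :
    ∑ i : Fin k, g i.castSucc = ∑ i : Fin k, g i.succ := by
  apply add_right_cancel (b := g (Fin.last k))
  rw [← Fin.sum_univ_castSucc, Fin.sum_univ_succ, hg, add_comm]

namespace SimpleGraph

variable {V : Type*} {G : SimpleGraph V}

lemma sdeg_eq_degree (G : SimpleGraph V) (x : V) [Fintype (G.neighborSet x)] :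
    sdeg G x = G.degree x := by
  rw [sdeg, ← Nat.card_coe_set_eq, Nat.card_eq_fintype_card, card_neighborSet_eq_degree]

lemma reachable_of_ntComps_le_one [Finite V] (h : ntComps G ≤ 1) {a b c d : V}
    (hab : G.Adj a b) (hcd : G.Adj c d) : G.Reachable a c := by
  by_contra hac
  have hne : G.connectedComponentMk a ≠ G.connectedComponentMk c :=
    fun h => hac (ConnectedComponent.exact h)
  have hsub : {G.connectedComponentMk a, G.connectedComponentMk c} ⊆
      {c | NontrivComp G c} := by
    rintro _ (rfl | rfl)
    exacts [⟨a, b, hab, rfl⟩, ⟨c, d, hcd, rfl⟩]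
  have := Set.ncard_le_ncard hsub (Set.toFinite _)
  rw [Set.ncard_pair hne] at this
  exact absurd (this.trans h) (by norm_num)

lemma ntComps_le_one_of_forall_adj_reachable (x₀ : V)
    (h : ∀ x y, G.Adj x y → G.Reachable x₀ x) : ntComps G ≤ 1 := by
  have hsub : {c | NontrivComp G c} ⊆ {G.connectedComponentMk x₀} := by
    rintro _ ⟨x, y, hxy, rfl⟩
    exact (ConnectedComponent.sound (h x y hxy)).symm
  simpa [ntComps] using Set.ncard_le_ncard hsub

namespace Walk

variable {u v : V}

lemma IsEulerian.rotate [DecidableEq V] {c : G.Walk v v} (hc : c.IsEulerian)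
    (hu : u ∈ c.support) : (c.rotate u hu).IsEulerian := by
  rw [isEulerian_iff] at hc ⊢
  exact ⟨hc.1.rotate hu, fun e he => (c.rotate_edges u hu).perm.mem_iff.mpr (hc.2 e he)⟩

lemma IsTrail.getVert_ne_getVert_add_two {p : G.Walk u v} (hp : p.IsTrail) {n : ℕ}
    (hn : n + 2 ≤ p.length) : p.getVert n ≠ p.getVert (n + 2) := by
  intro h
  have hlen : n + 1 < p.edges.length := by simp; omega
  have := (hp.edges_nodup.getElem_inj_iff (i := n) (j := n + 1) (hi := by omega) (hj := hlen)).mp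
    (by rw [getElem_edges, getElem_edges, h, Sym2.eq_swap])
  omega

lemma IsTrail.three_le_degree_of_getVert_eq [Fintype V] [DecidableEq V] [DecidableRel G.Adj]
    {p : G.Walk u v} (hp : p.IsTrail) {n m : ℕ} (hn : 0 < n) (hnm : n < m) (hm : m < p.length)
    (h : p.getVert n = p.getVert m) : 3 ≤ G.degree (p.getVert n) := by
  have hlen : p.edges.length = p.length := length_edges p
  have hne : ∀ i j (hi : i < p.edges.length) (hj : j < p.edges.length), i ≠ j →
      p.edges[i] ≠ p.edges[j] := fun i j hi hj hij h => hij (hp.edges_nodup.getElem_inj_iff.mp h)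
  have hsub : {p.edges[n - 1], p.edges[n], p.edges[m]} ⊆ G.incidenceFinset (p.getVert n) := by
    intro e he
    rw [mem_incidenceFinset]
    simp only [Finset.mem_insert, Finset.mem_singleton] at he
    rcases he with rfl | rfl | rfl
    · refine ⟨p.edges_subset_edgeSet (List.getElem_mem _), ?_⟩
      rw [getElem_edges, Nat.sub_add_cancel hn]
      exact Sym2.mem_mk_right _ _
    · refine ⟨p.edges_subset_edgeSet (List.getElem_mem _), ?_⟩
      rw [getElem_edges]
      exact Sym2.mem_mk_left _ _
    · refine ⟨p.edges_subset_edgeSet (List.getElem_mem _), ?_⟩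
      rw [getElem_edges, h]
      exact Sym2.mem_mk_left _ _
  rw [← card_incidenceFinset_eq_degree]
  refine le_trans (Finset.card_eq_three.mpr ?_).ge (Finset.card_le_card hsub)
  exact ⟨_, _, _, hne _ _ _ _ (by omega), hne _ _ _ _ (by omega), hne _ _ _ _ (by omega), rfl⟩

lemma IsTrail.eq_of_getVert_eq_of_degree_le_two [Fintype V] [DecidableEq V]
    [DecidableRel G.Adj] {p : G.Walk u v} (hp : p.IsTrail) {n m : ℕ} (hn : 0 < n)
    (hn' : n < p.length) (hm : 0 < m) (hm' : m < p.length) (h : p.getVert n = p.getVert m)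
    (hdeg : G.degree (p.getVert n) ≤ 2) : n = m := by
  by_contra hnm
  wlog hlt : n < m generalizing n m
  · exact this hm hm' hn hn' h.symm (h ▸ hdeg) (Ne.symm hnm) (by omega)
  have := hp.three_le_degree_of_getVert_eq hn hlt hm' h
  omega

lemma IsTrail.exists_adj_notMem_edges [Fintype V] [DecidableEq V] [DecidableRel G.Adj]
    {p : G.Walk u v} (hp : p.IsTrail) (huv : u ≠ v) (hu : Even (G.degree u)) :
    ∃ w, G.Adj u w ∧ s(u, w) ∉ p.edges := by
  by_contra! hall
  have hcount : p.edges.countP (u ∈ ·) = G.degree u := by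
    rw [← card_incidenceFinset_eq_degree, ← Multiset.coe_countP, Multiset.countP_eq_card_filter]
    change (hp.edgesFinset.filter (u ∈ ·)).card = _
    congr 1
    ext e
    simp only [Finset.mem_filter, mem_incidenceFinset]
    refine ⟨fun h => ⟨p.edges_subset_edgeSet h.1, h.2⟩, fun ⟨he, hue⟩ => ⟨?_, hue⟩⟩
    induction e using Sym2.ind with | _ x y => ?_
    rcases Sym2.mem_iff.mp hue with rfl | rfl
    · exact hall y he
    · exact Sym2.eq_swap ▸ hall x (G.adj_symm he)
  exact ((hp.even_countP_edges_iff u).mp (hcount ▸ hu) huv).1 rfl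

lemma exists_adj_mem_support_notMem_edges
    (hconn : ∀ ⦃a b c d⦄, G.Adj a b → G.Adj c d → G.Reachable a c)
    {p : G.Walk u v} (hp : p.edges ≠ []) {a b : V} (hab : G.Adj a b) (habp : s(a, b) ∉ p.edges) :
    ∃ x y, G.Adj x y ∧ x ∈ p.support ∧ s(x, y) ∉ p.edges := by
  obtain ⟨⟨c, d⟩, hcd⟩ := List.exists_mem_of_ne_nil _ hp
  by_cases ha : a ∈ p.support
  · exact ⟨a, b, hab, ha, habp⟩
  obtain ⟨q⟩ := hconn (p.adj_of_mem_edges hcd) hab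
  obtain ⟨d, -, hd, hd'⟩ :=
    q.exists_boundary_dart {x | x ∈ p.support} (p.fst_mem_support_of_mem_edges hcd) ha
  exact ⟨d.fst, d.snd, d.adj, hd, fun h => hd' (p.snd_mem_support_of_mem_edges h)⟩

end Walk

open Walk in
theorem exists_isEulerian_of_even_degree [Fintype V] [Nonempty V] [DecidableEq V]
    [DecidableRel G.Adj] (heven : ∀ v, Even (G.degree v))
    (hconn : ∀ ⦃a b c d⦄, G.Adj a b → G.Adj c d → G.Reachable a c) :
    ∃ u, ∃ p : G.Walk u u, p.IsEulerian := by
  obtain ⟨u, v, p, hp, hmax⟩ := Walk.exists_isTrail_forall_isTrail_length_le_length G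
  obtain rfl : u = v := by
    by_contra huv
    obtain ⟨w, huw, hw⟩ := hp.exists_adj_notMem_edges huv (heven u)
    have := hmax _ _ (cons huw.symm p) (by rw [isTrail_cons, Sym2.eq_swap]; exact ⟨hp, hw⟩)
    simp at this
  refine ⟨u, p, hp.isEulerian_of_forall_mem fun e he => ?_⟩
  by_contra hep
  induction e using Sym2.ind with | _ a b => ?_
  rw [mem_edgeSet] at he
  have hne : p.edges ≠ [] := by
    intro hnil
    have := hmax _ _ (cons he nil) (by simp)
    rw [← p.length_edges, hnil] at this
    simp at this
  obtain ⟨x, y, hxy, hx, hxyp⟩ := exists_adj_mem_support_notMem_edges hconn hne he hep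
  have := hmax _ _ (cons hxy.symm (p.rotate x hx)) <| by
    rw [isTrail_cons, Sym2.eq_swap, (p.rotate_edges x hx).perm.mem_iff]
    exact ⟨hp.rotate hx, hxyp⟩
  simp at this

end SimpleGraph

namespace Hypergraph'

open SimpleGraph Walk Sum

variable {H : Hypergraph'} {G : SimpleGraph (H.V ⊕ H.E)} {W : H.Walk}

lemma incidenceGraph_adj_inl_inr {v : H.V} {e : H.E} :
    H.incidenceGraph.Adj (inl v) (inr e) ↔ v ∈ H.mem e := by
  simp [incidenceGraph]

lemma incidenceGraph_adj_isLeft_iff {x y : H.V ⊕ H.E} (h : H.incidenceGraph.Adj x y) :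
    x.isLeft ↔ ¬ y.isLeft := by
  rcases h with ⟨v, e, rfl, rfl, -⟩ | ⟨v, e, rfl, rfl, -⟩ <;> simp

lemma neighborSet_inr_of_le (hG : G ≤ H.incidenceGraph) (e : H.E) :
    G.neighborSet (inr e) = inl '' {v | G.Adj (inr e) (inl v)} := by
  ext (v | f)
  · simp
  · simpa using fun h => by simpa using incidenceGraph_adj_isLeft_iff (hG h)

lemma neighborSet_inl_of_le (hG : G ≤ H.incidenceGraph) (v : H.V) :
    G.neighborSet (inl v) = inr '' {e | G.Adj (inl v) (inr e)} := by
  ext (w | e)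
  · simpa using fun h => by simpa using incidenceGraph_adj_isLeft_iff (hG h)
  · simp

lemma sdeg_inr_eq_ncard (hG : G ≤ H.incidenceGraph) (e : H.E) :
    sdeg G (inr e) = {v | G.Adj (inr e) (inl v)}.ncard := by
  rw [sdeg, neighborSet_inr_of_le hG, Set.ncard_image_of_injective _ inl_injective]

lemma sdeg_inl_eq_ncard (hG : G ≤ H.incidenceGraph) (v : H.V) :
    sdeg G (inl v) = {e | G.Adj (inl v) (inr e)}.ncard := by
  rw [sdeg, neighborSet_inl_of_le hG, Set.ncard_image_of_injective _ inr_injective]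

lemma eulerSubgraph_le_incidenceGraph (F : Set H.Walk) : H.eulerSubgraph F ≤ H.incidenceGraph := by
  have hmem {v : H.V} {e : H.E} : H.ConsecIn F v e → v ∈ H.mem e := by
    rintro ⟨W, -, i, rfl, rfl | rfl⟩
    exacts [W.mem_left i, W.mem_right i]
  rintro x y (⟨v, e, rfl, rfl, h⟩ | ⟨v, e, rfl, rfl, h⟩)
  exacts [Or.inl ⟨v, e, rfl, rfl, hmem h⟩, Or.inr ⟨v, e, rfl, rfl, hmem h⟩]

lemma eulerSubgraph_singleton_adj_inl_inr {v : H.V} {e : H.E} :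
    (H.eulerSubgraph {W}).Adj (inl v) (inr e) ↔
      ∃ i, W.edge i = e ∧ (W.vtx i.castSucc = v ∨ W.vtx i.succ = v) := by
  simp [eulerSubgraph, ConsecIn, eq_comm]

lemma ntComps_eulerSubgraph_singleton_le_one (W : H.Walk) :
    ntComps (H.eulerSubgraph {W}) ≤ 1 := by
  have hleft (i : Fin W.k) :
      (H.eulerSubgraph {W}).Adj (inl (W.vtx i.castSucc)) (inr (W.edge i)) :=
    eulerSubgraph_singleton_adj_inl_inr.mpr ⟨i, rfl, Or.inl rfl⟩
  have hright (i : Fin W.k) : (H.eulerSubgraph {W}).Adj (inl (W.vtx i.succ)) (inr (W.edge i)) :=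
    eulerSubgraph_singleton_adj_inl_inr.mpr ⟨i, rfl, Or.inr rfl⟩
  have hvtx (j : Fin (W.k + 1)) :
      (H.eulerSubgraph {W}).Reachable (inl (W.vtx 0)) (inl (W.vtx j)) := by
    induction j using Fin.induction with
    | zero => rfl
    | succ i ih => exact ih.trans ((hleft i).reachable.trans (hright i).symm.reachable)
  refine ntComps_le_one_of_forall_adj_reachable (inl (W.vtx 0)) ?_
  rintro x y
    (⟨v, e, rfl, rfl, ⟨_, rfl, i, rfl, rfl | rfl⟩⟩ | ⟨v, e, rfl, rfl, ⟨_, rfl, i, rfl, -⟩⟩)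
  exacts [hvtx _, hvtx _, (hvtx _).trans (hleft i).reachable]

lemma IsEulerTour.sdeg_eulerSubgraph_inr (hW : H.IsEulerTour W) (e : H.E) :
    sdeg (H.eulerSubgraph {W}) (inr e) = 2 := by
  obtain ⟨i, rfl⟩ := hW.2.2 e
  have hnbrs : {v | (H.eulerSubgraph {W}).Adj (inr (W.edge i)) (inl v)} =
      {W.vtx i.castSucc, W.vtx i.succ} := by
    ext v
    simp [adj_comm, eulerSubgraph_singleton_adj_inl_inr, hW.2.1.eq_iff, eq_comm]
  rw [sdeg_inr_eq_ncard (eulerSubgraph_le_incidenceGraph _), hnbrs, Set.ncard_pair (W.ne i)]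

lemma IsEulerTour.even_sdeg_eulerSubgraph_inl (hW : H.IsEulerTour W) (v : H.V) :
    Even (sdeg (H.eulerSubgraph {W}) (inl v)) := by
  have hnbrs : {e | (H.eulerSubgraph {W}).Adj (inl v) (inr e)} =
      W.edge '' {i | W.vtx i.castSucc = v ∨ W.vtx i.succ = v} := by
    ext e
    simp [eulerSubgraph_singleton_adj_inl_inr, and_comm]
  have hdisj : Disjoint (Finset.univ.filter fun i : Fin W.k => W.vtx i.castSucc = v)
      (Finset.univ.filter fun i : Fin W.k => W.vtx i.succ = v) := by
    simpa [Finset.disjoint_left] using fun i h h' => W.ne i (h.trans h'.symm)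
  have hcount := Fin.sum_castSucc_eq_sum_succ (fun j => if W.vtx j = v then 1 else 0)
    (by rw [hW.1.2.1])
  rw [sdeg_inl_eq_ncard (eulerSubgraph_le_incidenceGraph _), hnbrs,
    Set.ncard_image_of_injective _ hW.2.1, Set.ncard_eq_toFinset_card', Set.toFinset_ofPred,
    Finset.filter_or, Finset.card_union_of_disjoint hdisj, Finset.card_filter, Finset.card_filter,
    hcount]
  exact ⟨_, rfl⟩

lemma isLeft_getVert_iff_even (hG : G ≤ H.incidenceGraph) {v : H.V} {y : H.V ⊕ H.E}
    (p : G.Walk (inl v) y) {i : ℕ} (hi : i ≤ p.length) : (p.getVert i).isLeft ↔ Even i := by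
  induction i with
  | zero => simp
  | succ i ih =>
    have := incidenceGraph_adj_isLeft_iff (hG (p.adj_getVert_succ (i := i) (by omega)))
    rw [Nat.even_add_one, ← ih (by omega)]
    tauto

lemma exists_adj_inr_inl_of_sdeg_ne_zero (hG : G ≤ H.incidenceGraph) {e : H.E}
    (he : sdeg G (inr e) ≠ 0) : ∃ v, G.Adj (inr e) (inl v) :=
  Set.nonempty_of_ncard_ne_zero (s := {v | G.Adj (inr e) (inl v)})
    (by rwa [← sdeg_inr_eq_ncard hG])

lemma exists_alternating (hG : G ≤ H.incidenceGraph) {v₀ v₁ : H.V}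
    (p : G.Walk (inl v₀) (inl v₁)) :
    ∃ (k : ℕ) (vtx : Fin (k + 1) → H.V) (edge : Fin k → H.E), p.length = 2 * k ∧
      (∀ i : Fin (k + 1), p.getVert (2 * i) = inl (vtx i)) ∧
      ∀ i : Fin k, p.getVert (2 * i + 1) = inr (edge i) := by
  have hpar : ∀ i ≤ p.length, ((p.getVert i).isLeft ↔ Even i) :=
    fun i hi => isLeft_getVert_iff_even hG p hi
  obtain ⟨k, hk⟩ : ∃ k, p.length = 2 * k := by
    obtain ⟨k, hk⟩ := (hpar _ le_rfl).mp (by simp)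
    exact ⟨k, by omega⟩
  have hv : ∀ i : Fin (k + 1), ∃ v, p.getVert (2 * i) = inl v :=
    fun i => isLeft_iff.mp ((hpar _ (by omega)).mpr (even_two_mul _))
  have he : ∀ i : Fin k, ∃ e, p.getVert (2 * i + 1) = inr e := fun i =>
    isRight_iff.mp (by simp [← not_isLeft, hpar _ (by omega : 2 * (i : ℕ) + 1 ≤ p.length)])
  choose vtx hvtx using hv
  choose edge hedge using he
  exact ⟨k, vtx, edge, hk, hvtx, hedge⟩

theorem hasEulerTour_of_isEulerian_inl [Nonempty H.E] (hG : G ≤ H.incidenceGraph)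
    (hdeg : ∀ e, sdeg G (inr e) = 2) {v₀ : H.V} {p : G.Walk (inl v₀) (inl v₀)}
    (hp : p.IsEulerian) : H.HasEulerTour := by
  obtain ⟨k, vtx, edge, hk, hvtx, hedge⟩ := exists_alternating hG p
  have hleft (i : Fin k) : G.Adj (inl (vtx i.castSucc)) (inr (edge i)) := by
    rw [← hvtx, ← hedge, Fin.val_castSucc]
    exact p.adj_getVert_succ (by omega)
  have hright (i : Fin k) : G.Adj (inr (edge i)) (inl (vtx i.succ)) := by
    rw [← hvtx, ← hedge, Fin.val_succ, mul_add, mul_one]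
    exact p.adj_getVert_succ (by omega)
  have hne (i : Fin k) : vtx i.castSucc ≠ vtx i.succ := by
    intro h
    apply hp.isTrail.getVert_ne_getVert_add_two (n := 2 * i) (by omega)
    have := congrArg (inl : H.V → H.V ⊕ H.E) h
    rwa [← hvtx, ← hvtx, Fin.val_castSucc, Fin.val_succ, mul_add, mul_one] at this
  have hclosed : vtx 0 = vtx (Fin.last k) := by
    apply inl_injective
    rw [← hvtx, ← hvtx, Fin.val_zero, Fin.val_last, ← hk, mul_zero, getVert_zero, getVert_length]
  have hinj : Function.Injective edge := by
    intro i j hij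
    have := hp.isTrail.eq_of_getVert_eq_of_degree_le_two (n := 2 * i + 1) (m := 2 * j + 1)
      (by omega) (by omega) (by omega) (by omega) (by rw [hedge, hedge, hij])
      (by rw [hedge, ← sdeg_eq_degree, hdeg])
    exact Fin.ext (by omega)
  have hsurj : Function.Surjective edge := by
    intro e
    obtain ⟨v, hv⟩ := exists_adj_inr_inl_of_sdeg_ne_zero hG (e := e) (by simp [hdeg])
    obtain ⟨n, hn, hnl⟩ := mem_support_iff_exists_getVert.mp
      (p.fst_mem_support_of_mem_edges (hp.mem_edges_iff.mpr hv))
    obtain ⟨i, rfl⟩ : Odd n :=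
      Nat.not_even_iff_odd.mp (by rw [← isLeft_getVert_iff_even hG p hnl, hn]; simp)
    exact ⟨⟨i, by omega⟩, inr_injective ((hedge _).symm.trans hn)⟩
  have hk2 : 2 ≤ k := by
    obtain ⟨i⟩ : Nonempty (Fin k) := hsurj.nonempty
    by_contra hk2
    obtain rfl : k = 1 := by have := i.isLt; omega
    exact hne 0 hclosed
  exact ⟨⟨k, vtx, edge, fun i => incidenceGraph_adj_inl_inr.mp (hG (hleft i)),
    fun i => incidenceGraph_adj_inl_inr.mp (hG (hright i).symm), hne⟩,
    ⟨hinj, hclosed, hk2⟩, hinj, hsurj⟩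

theorem hasEulerTour_of_isEulerian [Nonempty H.E] (hG : G ≤ H.incidenceGraph)
    (hdeg : ∀ e, sdeg G (inr e) = 2) {u : H.V ⊕ H.E} {p : G.Walk u u} (hp : p.IsEulerian) :
    H.HasEulerTour := by
  obtain ⟨e⟩ := ‹Nonempty H.E›
  obtain ⟨v, hv⟩ := exists_adj_inr_inl_of_sdeg_ne_zero hG (e := e) (by simp [hdeg])
  exact hasEulerTour_of_isEulerian_inl hG hdeg
    (hp.rotate (p.snd_mem_support_of_mem_edges (hp.mem_edges_iff.mpr hv)))

end Hypergraph'

open Hypergraph' SimpleGraph Sum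

/-- Theorem 4.1(2): `H` is eulerian iff its incidence graph has a spanning
subgraph with at most one nontrivial connected component in which every
e-vertex has degree `2` and every v-vertex has even degree. -/
theorem eulerian_iff_spanning_subgraph (H : Hypergraph') :
    H.IsEulerian ↔
      ∃ G' : SimpleGraph (H.V ⊕ H.E), G' ≤ H.incidenceGraph ∧
        ntComps G' ≤ 1 ∧
        (∀ e : H.E, sdeg G' (Sum.inr e) = 2) ∧
        (∀ v : H.V, Even (sdeg G' (Sum.inl v))) := by
  constructor
  · rintro (hE | ⟨W, hW⟩)
    · refine ⟨⊥, bot_le, ntComps_le_one_of_forall_adj_reachable (inl (Classical.arbitrary _))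
        (fun _ _ h => h.elim), isEmptyElim, fun v => ?_⟩
      simp [sdeg]
    · exact ⟨H.eulerSubgraph {W}, eulerSubgraph_le_incidenceGraph _,
        ntComps_eulerSubgraph_singleton_le_one W, hW.sdeg_eulerSubgraph_inr,
        hW.even_sdeg_eulerSubgraph_inl⟩
  · rintro ⟨G, hG, hcomp, hdeg_e, hdeg_v⟩
    rcases isEmpty_or_nonempty H.E with hE | hE
    · exact Or.inl hE
    have heven (x : H.V ⊕ H.E) : Even (G.degree x) := by
      rcases x with v | e <;> rw [← sdeg_eq_degree]
      exacts [hdeg_v v, hdeg_e e ▸ even_two]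
    obtain ⟨u, p, hp⟩ := exists_isEulerian_of_even_degree heven
      fun _ _ _ _ => reachable_of_ntComps_le_one hcomp
    exact Or.inr (hasEulerTour_of_isEulerian hG hdeg_e hp)
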